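/- arXiv:1312.7792 — 5 statements merged into one kernel-verified Lean document; each statement's English description precedes it below -/
import Mathlib

section
/- For x, y in a convex domain Ω and a hyperplane H not passing through a fixed basepoint o ∈ Ω, the symmetric difference of π[o,x] and π[o,y] (sets of hyperplanes meeting the respective segments) agrees with π[x,y] up to the set of hyperplanes passing through x or through y (a ν-null set under the standing assumptions). -/
/-! Projecting onto the normal `v` of `H = {⟪·, v⟫ = c}` reduces everything to the real line:
`H` meets `[a, b]` iff `c` lies between `⟪a, v⟫` and `⟪b, v⟫`. A point `c` of a line, distinct
from `g`, `a`, `b`, lies between `a` and `b` iff it separates exactly one of them from `g`. -/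

open MeasureTheory Set

noncomputable section

/-- Euclidean space `ℝⁿ`. -/
abbrev Euc (n : ℕ) := EuclideanSpace ℝ (Fin n)

/-- The space of affine hyperplanes in `ℝⁿ`, encoded as pairs `(v, c)` with `‖v‖ = 1`,
representing the hyperplane `{x : ⟪x, v⟫ = c}`. -/
abbrev Hyp (n : ℕ) := {p : Euc n × ℝ // ‖p.1‖ = 1}

/-- The hyperplane determined by `H`, as a subset of `ℝⁿ`. -/
def hset {n : ℕ} (H : Hyp n) : Set (Euc n) := {x | (inner ℝ x H.1.1 : ℝ) = H.1.2}

/-- `meets A = π A`: the set of hyperplanes intersecting `A`. -/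
def meets {n : ℕ} (A : Set (Euc n)) : Set (Hyp n) := {H | (hset H ∩ A).Nonempty}

/-- The unit normal of `H` pointing out of the halfspace containing the basepoint `o`. -/
def nrm {n : ℕ} (o : Euc n) (H : Hyp n) : Euc n :=
  if (inner ℝ o H.1.1 : ℝ) < H.1.2 then H.1.1 else -H.1.1

/-- `fnu ν o x = ∫_{π[o,x]} n(H) dν(H)`. -/
def fnu {n : ℕ} (ν : Measure (Hyp n)) (o : Euc n) (x : Euc n) : Euc n :=
  ∫ H in meets (segment ℝ o x), nrm o H ∂ν

/-- `sin α(v, H) = |⟪v, n(H)⟫| / |v|`, the sine of the angle between the line of `v`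
and the hyperplane `H`. -/
def sinA {n : ℕ} (v : Euc n) (H : Hyp n) : ℝ := |(inner ℝ v H.1.1 : ℝ)| / ‖v‖

theorem mem_symmDiff_uIcc_iff {α : Type*} [LinearOrder α] {g a b c : α}
    (hg : g ≠ c) (ha : a ≠ c) (hb : b ≠ c) :
    c ∈ symmDiff (uIcc g a) (uIcc g b) ↔ c ∈ uIcc a b := by
  rcases hg.lt_or_gt with hg | hg <;> rcases ha.lt_or_gt with ha | ha <;>
    rcases hb.lt_or_gt with hb | hb <;>
    simp [mem_symmDiff, mem_uIcc, hg.le, hg.not_ge, ha.le, ha.not_ge, hb.le, hb.not_ge]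

theorem mem_meets_singleton_iff {n : ℕ} (H : Hyp n) (p : Euc n) :
    H ∈ meets {p} ↔ p ∈ hset H :=
  inter_singleton_nonempty

theorem mem_meets_segment_iff {n : ℕ} (H : Hyp n) (a b : Euc n) :
    H ∈ meets (segment ℝ a b) ↔
      H.1.2 ∈ uIcc (inner ℝ a H.1.1 : ℝ) (inner ℝ b H.1.1 : ℝ) := by
  have himage := image_segment ℝ (innerₛₗ ℝ H.1.1).toAffineMap a b
  simp only [LinearMap.coe_toAffineMap, coe_innerₛₗ_apply,
    fun w => real_inner_comm w H.1.1] at himage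
  rw [← segment_eq_uIcc, ← himage, mem_image, meets, mem_ofPred_eq, inter_comm]
  rfl

theorem stmt2_general (n : ℕ) (Ω : Set (Euc n)) (ν : Measure (Hyp n))
    (hpt : ∀ p ∈ Ω, ν (meets {p}) = 0)
    (o x y : Euc n) (hx : x ∈ Ω) (hy : y ∈ Ω) :
    (∀ H : Hyp n, o ∉ hset H → H ∉ meets {x} ∪ meets {y} →
      (H ∈ symmDiff (meets (segment ℝ o x)) (meets (segment ℝ o y)) ↔
        H ∈ meets (segment ℝ x y))) ∧
    ν (meets {x} ∪ meets {y}) = 0 := by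
  refine ⟨fun H hoH hxy => ?_, measure_union_null (hpt x hx) (hpt y hy)⟩
  rw [mem_union, not_or, mem_meets_singleton_iff, mem_meets_singleton_iff] at hxy
  rw [mem_symmDiff, mem_meets_segment_iff, mem_meets_segment_iff, mem_meets_segment_iff,
    ← mem_symmDiff]
  exact mem_symmDiff_uIcc_iff hoH hxy.1 hxy.2

/-- for a hyperplane `H` not through the basepoint `o`, membership in the
symmetric difference of `π[o,x]` and `π[o,y]` agrees with membership in `π[x,y]`, except
possibly for hyperplanes through `x` or through `y`; and the latter form a `ν`-null set. -/
theorem stmt2 (n : ℕ) (hn : 2 ≤ n) (Ω : Set (Euc n)) (hΩo : IsOpen Ω) (hΩne : Ω.Nonempty)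
    (hΩc : Convex ℝ Ω) (ν : Measure (Hyp n))
    (hpt : ∀ p ∈ Ω, ν (meets {p}) = 0)
    (o x y : Euc n) (ho : o ∈ Ω) (hx : x ∈ Ω) (hy : y ∈ Ω) :
    (∀ H : Hyp n, o ∉ hset H → H ∉ meets {x} ∪ meets {y} →
      (H ∈ symmDiff (meets (segment ℝ o x)) (meets (segment ℝ o y)) ↔
        H ∈ meets (segment ℝ x y))) ∧
    ν (meets {x} ∪ meets {y}) = 0 :=
  stmt2_general n Ω ν hpt o x y hx hy
end
end

section
/- With f_ν as above, for all distinct x, y ∈ Ω: |f_ν(x) − f_ν(y)| ≥ ∫_{π[x,y]} sin α(x−y, H) dν(H). -/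
open MeasureTheory Set

noncomputable section

/-!
For a hyperplane `H = {⟪·, v⟫ = c}` write `g_H = ⟪·, v⟫ - c`; then
`⟪x - y, n(H)⟫ = ±(g_H x - g_H y)`, the sign being that of `-g_H o`. A hyperplane avoiding `o`, `x`, `y` (true `ν`-a.e.) separates `x`
from `y` iff it separates `o` from exactly one of them, and the orientation of `n(H)` makes
`(𝟙_{π[o,x]} - 𝟙_{π[o,y]}) ⟪x - y, n(H)⟫ = 𝟙_{π[x,y]} |⟪x - y, v⟫|`. Integrating against `ν` gives
`∫_{π[x,y]} |⟪x - y, v⟫| dν = ⟪x - y, f_ν x - f_ν y⟫`, and Cauchy–Schwarz concludes.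
-/

namespace Hyp

variable {n : ℕ}

def signedDist (H : Hyp n) : Euc n →ᵃ[ℝ] ℝ :=
  (innerₛₗ ℝ H.1.1).toAffineMap - AffineMap.const ℝ (Euc n) H.1.2

lemma signedDist_apply (H : Hyp n) (a : Euc n) : H.signedDist a = inner ℝ a H.1.1 - H.1.2 := by
  simp [signedDist, real_inner_comm]

lemma continuous_signedDist_apply (a : Euc n) : Continuous fun H : Hyp n => H.signedDist a := by
  simp only [signedDist_apply]
  fun_prop

end Hyp

section

open Hyp

variable {n : ℕ}

lemma mem_meets_iff_zero_mem_image {A : Set (Euc n)} {H : Hyp n} :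
    H ∈ meets A ↔ (0 : ℝ) ∈ H.signedDist '' A := by
  simp [meets, hset, signedDist_apply, sub_eq_zero, Set.Nonempty, and_comm]

lemma mem_meets_singleton {p : Euc n} {H : Hyp n} : H ∈ meets {p} ↔ H.signedDist p = 0 := by
  rw [mem_meets_iff_zero_mem_image, image_singleton, mem_singleton_iff, eq_comm]

lemma mem_meets_segment {a b : Euc n} {H : Hyp n} :
    H ∈ meets (segment ℝ a b) ↔ H.signedDist a * H.signedDist b ≤ 0 := by
  rw [mem_meets_iff_zero_mem_image, image_segment, segment_eq_uIcc, mem_uIcc, mul_nonpos_iff]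
  tauto

lemma measurableSet_meets_segment (a b : Euc n) : MeasurableSet (meets (segment ℝ a b)) := by
  rw [show meets (segment ℝ a b) = {H | H.signedDist a * H.signedDist b ≤ 0} from
    Set.ext fun _ => mem_meets_segment]
  exact measurableSet_le
    ((continuous_signedDist_apply a).mul (continuous_signedDist_apply b)).measurable
    measurable_const

lemma measurable_nrm (o : Euc n) : Measurable (nrm o) := by
  have hp : Measurable fun H : Hyp n => H.1 := measurable_subtype_coe
  exact Measurable.ite (measurableSet_lt hp.fst.const_inner hp.snd) hp.fst hp.fst.neg

lemma norm_nrm (o : Euc n) (H : Hyp n) : ‖nrm o H‖ = 1 := by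
  unfold nrm
  split_ifs <;> simp [H.2]

lemma integrableOn_nrm {ν : Measure (Hyp n)} (o : Euc n) {S : Set (Hyp n)} (hS : ν S ≠ ⊤) :
    IntegrableOn (nrm o) S ν :=
  (integrableOn_const hS (C := (1 : ℝ))).mono' (measurable_nrm o).aestronglyMeasurable
    (ae_of_all _ fun H => (norm_nrm o H).le)

lemma inner_sub_nrm (o x y : Euc n) (H : Hyp n) :
    inner ℝ (x - y) (nrm o H) = if H.signedDist o < 0 then H.signedDist x - H.signedDist y
      else H.signedDist y - H.signedDist x := by
  simp only [nrm, signedDist_apply, sub_neg]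
  split_ifs <;> simp only [inner_neg_right, inner_sub_left] <;> ring

/-- With `a, b, c` the values of `g_H` at `o, x, y`: `H` separates `x` from `y` iff it separates
`o` from exactly one of them. -/
lemma ite_abs_sub_eq_sub_ite {a b c : ℝ} (ha : a ≠ 0) (hb : b ≠ 0) (hc : c ≠ 0) :
    (if b * c ≤ 0 then |b - c| else 0) =
      (if a * b ≤ 0 then (if a < 0 then b - c else c - b) else 0) -
        (if a * c ≤ 0 then (if a < 0 then b - c else c - b) else 0) := by
  rcases ha.lt_or_gt with ha | ha <;> rcases hb.lt_or_gt with hb | hb <;>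
    rcases hc.lt_or_gt with hc | hc <;>
    split_ifs <;>
    first
    | (exfalso; nlinarith)
    | (rw [abs_of_neg (by linarith)]; ring)
    | (rw [abs_of_pos (by linarith)]; ring)
    | ring

lemma indicator_meets_segment_abs_inner (o x y : Euc n) {H : Hyp n} (ho : H ∉ meets {o})
    (hx : H ∉ meets {x}) (hy : H ∉ meets {y}) :
    (meets (segment ℝ x y)).indicator (fun H => |inner ℝ (x - y) H.1.1|) H =
      (meets (segment ℝ o x)).indicator (fun H => inner ℝ (x - y) (nrm o H)) H -
        (meets (segment ℝ o y)).indicator (fun H => inner ℝ (x - y) (nrm o H)) H := by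
  rw [mem_meets_singleton] at ho hx hy
  have habs : |inner ℝ (x - y) H.1.1| = |H.signedDist x - H.signedDist y| := by
    rw [signedDist_apply, signedDist_apply, inner_sub_left, sub_sub_sub_cancel_right]
  simp only [indicator, mem_meets_segment, habs, inner_sub_nrm]
  exact ite_abs_sub_eq_sub_ite ho hx hy

theorem integral_meets_segment_abs_inner {ν : Measure (Hyp n)} {o x y : Euc n}
    (hox : ν (meets (segment ℝ o x)) ≠ ⊤) (hoy : ν (meets (segment ℝ o y)) ≠ ⊤)
    (ho : ν (meets {o}) = 0) (hx : ν (meets {x}) = 0) (hy : ν (meets {y}) = 0) :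
    ∫ H in meets (segment ℝ x y), |inner ℝ (x - y) H.1.1| ∂ν =
      inner ℝ (x - y) (fnu ν o x - fnu ν o y) := by
  have hint : ∀ {a}, ν (meets (segment ℝ o a)) ≠ ⊤ →
      Integrable ((meets (segment ℝ o a)).indicator fun H => inner ℝ (x - y) (nrm o H)) ν :=
    fun ha => IntegrableOn.integrable_indicator ((integrableOn_nrm o ha).const_inner (x - y))
      (measurableSet_meets_segment o _)
  have hfnu : ∀ {a}, ν (meets (segment ℝ o a)) ≠ ⊤ →
      ∫ H in meets (segment ℝ o a), inner ℝ (x - y) (nrm o H) ∂ν = inner ℝ (x - y) (fnu ν o a) :=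
    fun ha => integral_inner (integrableOn_nrm o ha) _
  have hae : ∀ᵐ H ∂ν, H ∉ meets {o} ∧ H ∉ meets {x} ∧ H ∉ meets {y} := by
    filter_upwards [measure_eq_zero_iff_ae_notMem.1 ho, measure_eq_zero_iff_ae_notMem.1 hx,
      measure_eq_zero_iff_ae_notMem.1 hy] with H h₁ h₂ h₃ using ⟨h₁, h₂, h₃⟩
  rw [← integral_indicator (measurableSet_meets_segment x y),
    integral_congr_ae (hae.mono fun H h => indicator_meets_segment_abs_inner o x y h.1 h.2.1 h.2.2),
    integral_sub (hint hox) (hint hoy), integral_indicator (measurableSet_meets_segment o x),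
    integral_indicator (measurableSet_meets_segment o y), hfnu hox, hfnu hoy, inner_sub_right]

end

theorem stmt5_general (n : ℕ) (Ω : Set (Euc n))
    (hΩc : Convex ℝ Ω) (ν : Measure (Hyp n))
    (hpt : ∀ p ∈ Ω, ν (meets {p}) = 0)
    (hcpt : ∀ K ⊆ Ω, IsCompact K → ν (meets K) < ⊤)
    (o : Euc n) (ho : o ∈ Ω) :
    ∀ x ∈ Ω, ∀ y ∈ Ω, x ≠ y →
      (∫ H in meets (segment ℝ x y), sinA (x - y) H ∂ν) ≤ ‖fnu ν o x - fnu ν o y‖ := by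
  intro x hx y hy hxy
  have hfin : ∀ a ∈ Ω, ν (meets (segment ℝ o a)) ≠ ⊤ := fun a ha => by
    refine (hcpt _ (hΩc.segment_subset ho ha) ?_).ne
    rw [← convexHull_pair]
    exact (toFinite _).isCompact_convexHull ℝ
  have hnorm : 0 < ‖x - y‖ := norm_pos_iff.2 (sub_ne_zero.2 hxy)
  calc ∫ H in meets (segment ℝ x y), sinA (x - y) H ∂ν
      = inner ℝ (x - y) (fnu ν o x - fnu ν o y) / ‖x - y‖ := by
        rw [← integral_meets_segment_abs_inner (hfin x hx) (hfin y hy) (hpt o ho) (hpt x hx)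
          (hpt y hy)]
        exact integral_div _ _
    _ ≤ ‖fnu ν o x - fnu ν o y‖ := by
        rw [div_le_iff₀ hnorm, mul_comm]
        exact real_inner_le_norm _ _

/-- `|f_ν(x) − f_ν(y)| ≥ ∫_{π[x,y]} sin α(x−y, H) dν(H)` for distinct `x, y`. -/
theorem stmt5 (n : ℕ) (hn : 2 ≤ n) (Ω : Set (Euc n)) (hΩo : IsOpen Ω) (hΩne : Ω.Nonempty)
    (hΩc : Convex ℝ Ω) (ν : Measure (Hyp n))
    (hpt : ∀ p ∈ Ω, ν (meets {p}) = 0)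
    (hseg : ∀ x ∈ Ω, ∀ y ∈ Ω, x ≠ y → 0 < ν (meets (segment ℝ x y)))
    (hcpt : ∀ K ⊆ Ω, IsCompact K → ν (meets K) < ⊤)
    (o : Euc n) (ho : o ∈ Ω) :
    ∀ x ∈ Ω, ∀ y ∈ Ω, x ≠ y →
      (∫ H in meets (segment ℝ x y), sinA (x - y) H ∂ν) ≤ ‖fnu ν o x - fnu ν o y‖ :=
  stmt5_general n Ω hΩc ν hpt hcpt o ho
end
end

section
/- The map f_ν is cyclically monotone: for every m ≥ 2 and all points x₁, …, x_m ∈ Ω with x_{m+1} = x₁, Σ_{k=1}^{m} ⟨f_ν(x_k), x_{k+1} − x_k⟩ ≤ 0. -/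
open MeasureTheory Set

noncomputable section

/-!
Let `s_H(y)` be the signed distance of `y` from the hyperplane `H`, positive on the side away
from `o`. The function `y ↦ max (s_H y) 0` (just `s_H y` if `o ∈ H`) is convex and
`1[H meets [o, y]] • n(H)` is a subgradient of it at `y`. Integrating over the hyperplanes that
meet one of the segments `[o, x_k]`, a set of finite `ν`-measure, shows that `f_ν(x_k)` is a
subgradient at `x_k` of one convex potential `Φ`. Hence
`⟪f_ν(x_k), x_{k+1} - x_k⟫ ≤ Φ(x_{k+1}) - Φ(x_k)`, and the cyclic sum telescopes to `0`.
-/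

theorem isCompact_segment {E : Type*} [AddCommGroup E] [TopologicalSpace E] [Module ℝ E]
    [IsTopologicalAddGroup E] [ContinuousSMul ℝ E] (a b : E) : IsCompact (segment ℝ a b) := by
  rw [segment_eq_image_lineMap]
  exact isCompact_Icc.image AffineMap.lineMap_continuous

namespace Fnu

variable {n : ℕ} (o : Euc n) {x : Euc n}

def level (H : Hyp n) : ℝ := if (inner ℝ o H.1.1 : ℝ) < H.1.2 then H.1.2 else -H.1.2

/-- Signed distance of `y` from `H`, positive on the side of `H` away from `o`. -/
def sdist (H : Hyp n) (y : Euc n) : ℝ := inner ℝ (nrm o H) y - level o H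

/-- Hyperplanes through `o` meet every segment `[o, y]`, so their contribution is linear. -/
def potential (H : Hyp n) (y : Euc n) : ℝ :=
  if sdist o H o < 0 then max (sdist o H y) 0 else sdist o H y

lemma norm_nrm (H : Hyp n) : ‖nrm o H‖ = 1 := by
  unfold nrm; split_ifs <;> simp [H.2]

lemma sdist_self_nonpos (H : Hyp n) : sdist o H o ≤ 0 := by
  unfold sdist nrm level
  rw [real_inner_comm]
  split_ifs with h
  · linarith
  · rw [inner_neg_right]; linarith

lemma sdist_sub_sdist (H : Hyp n) (x y : Euc n) :
    sdist o H y - sdist o H x = inner ℝ (nrm o H) (y - x) := by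
  simp only [sdist, inner_sub_right]; ring

lemma mem_hset_iff {H : Hyp n} {y : Euc n} : y ∈ hset H ↔ sdist o H y = 0 := by
  unfold hset sdist nrm level
  split_ifs
  · rw [real_inner_comm, sub_eq_zero]; rfl
  · rw [inner_neg_left, real_inner_comm, neg_sub_neg, sub_eq_zero, eq_comm]; rfl

lemma continuous_sdist (H : Hyp n) : Continuous (sdist o H) :=
  (continuous_const.inner continuous_id).sub continuous_const

lemma mem_meets_segment_iff {H : Hyp n} :
    H ∈ meets (segment ℝ o x) ↔ sdist o H o = 0 ∨ 0 ≤ sdist o H x := by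
  constructor
  · rintro ⟨z, hzH, hz⟩
    by_contra! h
    have hconv : Convex ℝ {y | inner ℝ (nrm o H) y < level o H} :=
      convex_halfSpace_lt (innerSL ℝ (nrm o H)).toLinearMap.isLinear _
    have hzneg := hconv.segment_subset
      (sub_neg.1 (h.1.lt_of_le (sdist_self_nonpos o H))) (sub_neg.1 h.2) hz
    exact (sub_neg.2 hzneg).ne ((mem_hset_iff o).1 hzH)
  · rintro (ho | hx)
    · exact ⟨o, (mem_hset_iff o).2 ho, left_mem_segment ℝ o x⟩
    · obtain ⟨z, hz, hz0⟩ := (convex_segment o x).isPreconnected.intermediate_value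
        (left_mem_segment ℝ o x) (right_mem_segment ℝ o x) (continuous_sdist o H).continuousOn
        ⟨sdist_self_nonpos o H, hx⟩
      exact ⟨z, (mem_hset_iff o).2 hz0, hz⟩

lemma abs_level_le {H : Hyp n} {z : Euc n} (hz : z ∈ hset H) : |level o H| ≤ ‖z‖ := by
  have hlevel : |level o H| = |(inner ℝ z H.1.1 : ℝ)| := by
    rw [show (inner ℝ z H.1.1 : ℝ) = H.1.2 from hz]; unfold level; split_ifs <;> simp
  rw [hlevel]
  simpa [H.2] using abs_real_inner_le_norm z H.1.1

lemma abs_sdist_le (H : Hyp n) (y : Euc n) : |sdist o H y| ≤ ‖y‖ + |level o H| := by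
  calc |sdist o H y| ≤ |(inner ℝ (nrm o H) y : ℝ)| + |level o H| := abs_sub _ _
    _ ≤ ‖y‖ + |level o H| := by
      gcongr; simpa [norm_nrm] using abs_real_inner_le_norm (nrm o H) y

lemma abs_potential_le (H : Hyp n) (y : Euc n) :
    |potential o H y| ≤ ‖y‖ + max ‖o‖ ‖y‖ := by
  by_cases hH : H ∈ meets (segment ℝ o y)
  · obtain ⟨z, hzH, hz⟩ := hH
    have hz_norm : ‖z‖ ≤ max ‖o‖ ‖y‖ :=
      (convexOn_norm convex_univ).le_on_segment (mem_univ o) (mem_univ y) hz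
    have hsdist := (abs_sdist_le o H y).trans
      (add_le_add_right ((abs_level_le o hzH).trans hz_norm) _)
    unfold potential
    split_ifs
    · rcases le_total (sdist o H y) 0 with h | h
      · rw [max_eq_right h, abs_zero]; positivity
      · rwa [max_eq_left h]
    · exact hsdist
  · rw [mem_meets_segment_iff, not_or, not_le] at hH
    rw [potential, if_pos ((sdist_self_nonpos o H).lt_of_ne hH.1), max_eq_right hH.2.le, abs_zero]
    positivity

lemma indicator_inner_le_potential_sub (H : Hyp n) (x y : Euc n) :
    (meets (segment ℝ o x)).indicator (fun H => (inner ℝ (nrm o H) (y - x) : ℝ)) H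
      ≤ potential o H y - potential o H x := by
  by_cases hH : H ∈ meets (segment ℝ o x)
  · rw [indicator_of_mem hH, ← sdist_sub_sdist]
    unfold potential
    split_ifs with ho
    · have hx := ((mem_meets_segment_iff o).1 hH).resolve_left ho.ne
      rw [max_eq_left hx]
      exact sub_le_sub_right (le_max_left _ _) _
    · exact le_rfl
  · rw [indicator_of_notMem hH]
    rw [mem_meets_segment_iff, not_or, not_le] at hH
    have ho := (sdist_self_nonpos o H).lt_of_ne hH.1
    rw [potential, potential, if_pos ho, if_pos ho, max_eq_right hH.2.le, sub_zero]
    exact le_max_right _ _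

lemma measurable_normal : Measurable fun H : Hyp n => H.1.1 :=
  measurable_fst.comp measurable_subtype_coe

lemma measurable_offset : Measurable fun H : Hyp n => H.1.2 :=
  measurable_snd.comp measurable_subtype_coe

lemma measurableSet_side : MeasurableSet {H : Hyp n | (inner ℝ o H.1.1 : ℝ) < H.1.2} :=
  measurableSet_lt (measurable_const.inner measurable_normal) measurable_offset

lemma measurable_nrm : Measurable (nrm o) :=
  Measurable.ite (measurableSet_side o) measurable_normal measurable_normal.neg

lemma measurable_level : Measurable (level o : Hyp n → ℝ) :=
  Measurable.ite (measurableSet_side o) measurable_offset measurable_offset.neg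

lemma measurable_sdist (y : Euc n) : Measurable fun H : Hyp n => sdist o H y :=
  ((measurable_nrm o).inner measurable_const).sub (measurable_level o)

lemma measurable_potential (y : Euc n) : Measurable fun H : Hyp n => potential o H y :=
  Measurable.ite (measurableSet_lt (measurable_sdist o o) measurable_const)
    ((measurable_sdist o y).max measurable_const) (measurable_sdist o y)

lemma measurableSet_meets_segment (x : Euc n) : MeasurableSet (meets (segment ℝ o x)) := by
  have hmeets : meets (segment ℝ o x) = {H | sdist o H o = 0} ∪ {H | 0 ≤ sdist o H x} :=
    Set.ext fun _ => mem_meets_segment_iff o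
  rw [hmeets]
  exact (measurableSet_eq_fun (measurable_sdist o o) measurable_const).union
    (measurableSet_le measurable_const (measurable_sdist o x))

variable {ν : Measure (Hyp n)} {S : Set (Hyp n)}

lemma integrableOn_nrm (hS : ν S ≠ ⊤) : IntegrableOn (nrm o) S ν :=
  Measure.integrableOn_of_bounded hS (measurable_nrm o).aestronglyMeasurable
    (ae_of_all _ fun H => (norm_nrm o H).le)

lemma integrableOn_potential (hS : ν S ≠ ⊤) (y : Euc n) :
    IntegrableOn (fun H => potential o H y) S ν :=
  Measure.integrableOn_of_bounded hS (measurable_potential o y).aestronglyMeasurable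
    (ae_of_all _ fun H => abs_potential_le o H y)

lemma inner_fnu_eq_setIntegral (hx : ν (meets (segment ℝ o x)) ≠ ⊤) (d : Euc n) :
    (inner ℝ (fnu ν o x) d : ℝ)
      = ∫ H in meets (segment ℝ o x), (inner ℝ (nrm o H) d : ℝ) ∂ν := by
  rw [fnu, real_inner_comm, ← integral_inner (integrableOn_nrm o hx)]
  simp_rw [real_inner_comm]

lemma inner_fnu_sub_le (hS : ν S ≠ ⊤) (hxS : meets (segment ℝ o x) ⊆ S) (y : Euc n) :
    (inner ℝ (fnu ν o x) (y - x) : ℝ)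
      ≤ ∫ H in S, potential o H y ∂ν - ∫ H in S, potential o H x ∂ν := by
  have hπ := measurableSet_meets_segment o x
  calc (inner ℝ (fnu ν o x) (y - x) : ℝ)
      = ∫ H in S, (meets (segment ℝ o x)).indicator
          (fun H => (inner ℝ (nrm o H) (y - x) : ℝ)) H ∂ν := by
        rw [inner_fnu_eq_setIntegral o (ne_top_of_le_ne_top hS (measure_mono hxS)),
          setIntegral_indicator hπ, inter_eq_self_of_subset_right hxS]
    _ ≤ ∫ H in S, (potential o H y - potential o H x) ∂ν :=
        setIntegral_mono (((integrableOn_nrm o hS).inner_const _).indicator hπ)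
          ((integrableOn_potential o hS y).sub (integrableOn_potential o hS x))
          (fun H => indicator_inner_le_potential_sub o H x y)
    _ = ∫ H in S, potential o H y ∂ν - ∫ H in S, potential o H x ∂ν :=
        integral_sub (integrableOn_potential o hS y) (integrableOn_potential o hS x)

end Fnu

theorem stmt9_general (n : ℕ) (Ω : Set (Euc n))
    (hΩc : Convex ℝ Ω) (ν : Measure (Hyp n))
    (hcpt : ∀ K ⊆ Ω, IsCompact K → ν (meets K) < ⊤)
    (o : Euc n) (ho : o ∈ Ω)
    (m : ℕ) (x : ℕ → Euc n) (hxΩ : ∀ k, x k ∈ Ω) (hcycle : x m = x 0) :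
    ∑ k ∈ Finset.range m, (inner ℝ (fnu ν o (x k)) (x (k + 1) - x k) : ℝ) ≤ 0 := by
  set S := ⋃ k ∈ Finset.range (m + 1), meets (segment ℝ o (x k))
  have hS : ν S ≠ ⊤ := (measure_biUnion_lt_top (Finset.range (m + 1)).finite_toSet fun k _ =>
    hcpt _ (hΩc.segment_subset ho (hxΩ k)) (isCompact_segment o (x k))).ne
  set Φ : ℕ → ℝ := fun k => ∫ H in S, Fnu.potential o H (x k) ∂ν
  calc ∑ k ∈ Finset.range m, (inner ℝ (fnu ν o (x k)) (x (k + 1) - x k) : ℝ)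
      ≤ ∑ k ∈ Finset.range m, (Φ (k + 1) - Φ k) := by
        refine Finset.sum_le_sum fun k hk => Fnu.inner_fnu_sub_le o hS ?_ _
        exact subset_biUnion_of_mem (u := fun k => meets (segment ℝ o (x k)))
          (Finset.mem_coe.2 (Finset.mem_range.2 (Nat.lt_succ_of_lt (Finset.mem_range.1 hk))))
    _ = 0 := by rw [Finset.sum_range_sub, sub_eq_zero]; simp only [Φ, hcycle]

/-- `f_ν` is cyclically monotone on `Ω`. -/
theorem stmt9 (n : ℕ) (hn : 2 ≤ n) (Ω : Set (Euc n)) (hΩo : IsOpen Ω) (hΩne : Ω.Nonempty)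
    (hΩc : Convex ℝ Ω) (ν : Measure (Hyp n))
    (hpt : ∀ p ∈ Ω, ν (meets {p}) = 0)
    (hseg : ∀ x ∈ Ω, ∀ y ∈ Ω, x ≠ y → 0 < ν (meets (segment ℝ x y)))
    (hcpt : ∀ K ⊆ Ω, IsCompact K → ν (meets K) < ⊤)
    (o : Euc n) (ho : o ∈ Ω)
    (m : ℕ) (hm : 2 ≤ m) (x : ℕ → Euc n) (hxΩ : ∀ k, x k ∈ Ω) (hcycle : x m = x 0) :
    ∑ k ∈ Finset.range m, (inner ℝ (fnu ν o (x k)) (x (k + 1) - x k) : ℝ) ≤ 0 :=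
  stmt9_general n Ω hΩc ν hcpt o ho m x hxΩ hcycle
end
end

section
/- There is a constant c = c(n) > 0 (one may take c = 4^{-n} n^{-1/2}) such that for every cube Q contained in Ω, the Euclidean diameter of f_ν(Q) is at least c times the d_ν-diameter of Q. -/
/-!
Along a segment `[x, y]`, away from the `ν`-null families of hyperplanes through `o`, `x` or `y`,
a hyperplane lies in exactly one of `π[o, x]`, `π[o, y]` iff it separates `x` from `y`, and then
its normal `n(H)` points from the side of `x` to the side of `y`. Hence
`⟪y - x, f_ν(y) - f_ν(x)⟫ = ∫_{H separates x, y} |⟪y - x, n(H)⟫| dν`, and Markov's inequality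
bounds `r · ν{H separating x, y : sin ∠(H, [x, y]) ≥ r}` by `‖f_ν(y) - f_ν(x)‖`.

A hyperplane meeting the cube `Q` of side `a` but missing its vertices, whose unit normal `v` has
its largest coordinate at `i` (so `|v i| ≥ n^{-1/2}`), separates the endpoints of some edge of `Q`
in direction `i`: rounding the other coordinates of a point of `H ∩ Q` to vertex coordinates one at
a time, the signed distance to `H` can be kept in a window of length `a |v i|`. So `π[p, q] ⊆ π Q`
is covered, up to a null set, by the `n 2ⁿ` families of steep separators of the edges of `Q`, which
gives `n^{-1/2} d_ν(p, q) ≤ n 2ⁿ diam f_ν(Q) ≤ 4ⁿ diam f_ν(Q)`.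
-/

open MeasureTheory Set

noncomputable section

/-- The axis-parallel closed cube with lower corner `b` and edge length `a`. -/
def cube {n : ℕ} (b : Euc n) (a : ℝ) : Set (Euc n) :=
  {z | ∀ i, z i ∈ Icc (b i) (b i + a)}

/-- `x` is a vertex of the cube `cube b a`. -/
def IsVertex {n : ℕ} (b : Euc n) (a : ℝ) (x : Euc n) : Prop :=
  ∀ i, x i = b i ∨ x i = b i + a

/-- The hyperplane `H` (strictly) separates the points `x` and `y`. -/
def Separates {n : ℕ} (H : Hyp n) (x y : Euc n) : Prop :=
  ((inner ℝ x H.1.1 : ℝ) - H.1.2) * ((inner ℝ y H.1.1 : ℝ) - H.1.2) < 0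

theorem IsCompact.convexJoin {E : Type*} [NormedAddCommGroup E] [NormedSpace ℝ E] {s t : Set E}
    (hs : IsCompact s) (ht : IsCompact t) : IsCompact (_root_.convexJoin ℝ s t) := by
  have : _root_.convexJoin ℝ s t =
      (fun p : (E × E) × ℝ => (1 - p.2) • p.1.1 + p.2 • p.1.2) '' ((s ×ˢ t) ×ˢ Icc 0 1) := by
    ext z
    simp only [mem_convexJoin, segment_eq_image, mem_image, mem_prod, Prod.exists]
    aesop
  rw [this]
  exact ((hs.prod ht).prod isCompact_Icc).image (by fun_prop)

lemma norm_le_sqrt_card_mul_abs {ι : Type*} [Fintype ι] (v : EuclideanSpace ℝ ι) {i : ι}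
    (hi : ∀ j, |v j| ≤ |v i|) : ‖v‖ ≤ √(Fintype.card ι) * |v i| := by
  rw [EuclideanSpace.norm_eq, ← Real.sqrt_sq (abs_nonneg (v i)),
    ← Real.sqrt_mul (Nat.cast_nonneg _)]
  refine Real.sqrt_le_sqrt ?_
  calc ∑ j, ‖v j‖ ^ 2 ≤ ∑ _j : ι, |v i| ^ 2 :=
        Finset.sum_le_sum fun j _ => pow_le_pow_left₀ (abs_nonneg _) (hi j) 2
    _ = _ := by simp

lemma exists_subset_add_sum_mem_Icc {ι : Type*} [DecidableEq ι] (T : Finset ι) {c d : ι → ℝ}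
    {L R : ℝ} (hc : ∀ j ∈ T, |c j| ≤ R - L) (hd : ∀ j ∈ T, d j ∈ uIcc 0 (c j)) {x : ℝ}
    (hx : x + ∑ j ∈ T, d j ∈ Icc L R) : ∃ s ⊆ T, x + ∑ j ∈ s, c j ∈ Icc L R := by
  induction T using Finset.induction_on generalizing x with
  | empty => exact ⟨∅, subset_rfl, by simpa using hx⟩
  | insert j T hjT ih =>
    rw [Finset.forall_mem_insert] at hc hd
    rw [Finset.sum_insert hjT] at hx
    -- `x + ∑ d` and `x + c j + ∑ d` lie on either side of `x + d j + ∑ d ∈ [L, R]` and differ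
    -- by at most `R - L`
    have key : x + ∑ j ∈ T, d j ∈ Icc L R ∨ x + c j + ∑ j ∈ T, d j ∈ Icc L R := by
      have hcj := abs_le.mp hc.1
      simp only [mem_Icc] at hx ⊢
      rcases mem_uIcc.mp hd.1 with ⟨h1, h2⟩ | ⟨h1, h2⟩ <;>
        rcases le_or_gt L (x + ∑ j ∈ T, d j) with h3 | h3 <;>
        rcases le_or_gt (x + ∑ j ∈ T, d j) R with h4 | h4 <;>
        first
          | exact Or.inl ⟨by linarith, by linarith⟩
          | exact Or.inr ⟨by linarith, by linarith⟩
    rcases key with h | h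
    · obtain ⟨s, hsT, hs⟩ := ih hc.2 hd.2 h
      exact ⟨s, hsT.trans (Finset.subset_insert j T), hs⟩
    · obtain ⟨s, hsT, hs⟩ := ih hc.2 hd.2 h
      refine ⟨insert j s, Finset.insert_subset_insert j hsT, ?_⟩
      rwa [Finset.sum_insert fun hjs => hjT (hsT hjs), ← add_assoc]

lemma ite_sub_ite_eq_ite_abs {go gx gy : ℝ} (ho : go ≠ 0) (hx : gx ≠ 0) (hy : gy ≠ 0) :
    let X := if go < 0 then gy - gx else -(gy - gx)
    ((if go * gy ≤ 0 then X else 0) - if go * gx ≤ 0 then X else 0) =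
      if gx * gy < 0 then |gy - gx| else 0 := by
  rcases ho.lt_or_gt with ho | ho <;> rcases hx.lt_or_gt with hx | hx <;>
    rcases hy.lt_or_gt with hy | hy <;>
    split_ifs <;>
    first
      | (exfalso; nlinarith)
      | (rw [abs_of_nonneg (by linarith)]; ring)
      | (rw [abs_of_nonpos (by linarith)]; ring)
      | ring

section Hyperplanes

variable {n : ℕ}

namespace Hyp

def sdist (H : Hyp n) (x : Euc n) : ℝ := inner ℝ x H.1.1 - H.1.2

lemma sdist_add (H : Hyp n) (x w : Euc n) : H.sdist (x + w) = H.sdist x + inner ℝ w H.1.1 := by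
  simp only [sdist, inner_add_left]; ring

lemma sdist_sub_sdist (H : Hyp n) (x y : Euc n) :
    H.sdist y - H.sdist x = inner ℝ (y - x) H.1.1 := by
  simp only [sdist, inner_sub_left]; ring

lemma continuous_sdist (x : Euc n) : Continuous fun H : Hyp n => H.sdist x := by
  unfold sdist; fun_prop

lemma mem_meets_singleton_iff {H : Hyp n} {x : Euc n} : H ∈ meets {x} ↔ H.sdist x = 0 := by
  simp [meets, hset, sdist, sub_eq_zero]

lemma mem_meets_segment_iff {H : Hyp n} {x y : Euc n} :
    H ∈ meets (segment ℝ x y) ↔ H.sdist x * H.sdist y ≤ 0 := by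
  let φ : Euc n →ᵃ[ℝ] ℝ :=
    (innerSL ℝ H.1.1).toLinearMap.toAffineMap - AffineMap.const ℝ (Euc n) H.1.2
  have hφ : ∀ x, φ x = H.sdist x := fun x => by simp [φ, sdist, real_inner_comm]
  have : H ∈ meets (segment ℝ x y) ↔ (0 : ℝ) ∈ φ '' segment ℝ x y := by
    simp only [meets, hset, Set.Nonempty, mem_inter_iff, mem_ofPred_eq, mem_image, hφ, sdist,
      sub_eq_zero]
    exact exists_congr fun z => and_comm
  rw [this, image_segment, hφ, hφ, segment_eq_uIcc, mem_uIcc, mul_nonpos_iff]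
  tauto

lemma separates_iff {H : Hyp n} {x y : Euc n} : Separates H x y ↔ H.sdist x * H.sdist y < 0 :=
  Iff.rfl

lemma separates_subset_meets_union (o x y : Euc n) :
    {H : Hyp n | Separates H x y} ⊆ meets (segment ℝ o x) ∪ meets (segment ℝ o y) := by
  intro H (h : H.sdist x * H.sdist y < 0)
  simp only [mem_union, mem_meets_segment_iff]
  by_contra! h'
  nlinarith [mul_pos h'.1 h'.2, sq_nonneg (H.sdist o)]

lemma nrm_eq (o : Euc n) (H : Hyp n) : nrm o H = if H.sdist o < 0 then H.1.1 else -H.1.1 := by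
  simp [nrm, sdist, sub_neg]

lemma norm_nrm (o : Euc n) (H : Hyp n) : ‖nrm o H‖ = 1 := by
  rw [nrm_eq]; split_ifs <;> simp [H.2]

lemma measurable_nrm (o : Euc n) : Measurable (nrm (n := n) o) := by
  simp only [funext (nrm_eq o)]
  exact Measurable.ite (measurableSet_lt (continuous_sdist o).measurable measurable_const)
    measurable_subtype_coe.fst measurable_subtype_coe.fst.neg

lemma measurableSet_meets_segment (x y : Euc n) : MeasurableSet (meets (segment ℝ x y)) := by
  simp only [Set.ext fun H => mem_meets_segment_iff (H := H) (x := x) (y := y)]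
  exact measurableSet_le ((continuous_sdist x).mul (continuous_sdist y)).measurable
    measurable_const

lemma measurableSet_separates (x y : Euc n) : MeasurableSet {H : Hyp n | Separates H x y} := by
  simp only [separates_iff]
  exact measurableSet_lt ((continuous_sdist x).mul (continuous_sdist y)).measurable
    measurable_const

lemma indicator_inner_nrm_sub_indicator {o x y : Euc n} {H : Hyp n} (ho : H.sdist o ≠ 0)
    (hx : H.sdist x ≠ 0) (hy : H.sdist y ≠ 0) :
    (meets (segment ℝ o y)).indicator (fun H => inner ℝ (y - x) (nrm o H)) H -
        (meets (segment ℝ o x)).indicator (fun H => inner ℝ (y - x) (nrm o H)) H =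
      {H : Hyp n | Separates H x y}.indicator (fun H => |inner ℝ (y - x) H.1.1|) H := by
  classical
  have hX : inner ℝ (y - x) (nrm o H) =
      if H.sdist o < 0 then H.sdist y - H.sdist x else -(H.sdist y - H.sdist x) := by
    rw [nrm_eq, sdist_sub_sdist]
    split_ifs <;> simp
  rw [indicator_apply, indicator_apply, indicator_apply]
  simp only [mem_meets_segment_iff, mem_ofPred_eq, separates_iff, hX, ← sdist_sub_sdist]
  exact ite_sub_ite_eq_ite_abs ho hx hy

end Hyp

lemma meets_mono {A B : Set (Euc n)} (h : A ⊆ B) : meets A ⊆ meets B :=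
  fun _ ⟨z, hzH, hzA⟩ => ⟨z, hzH, h hzA⟩

lemma sinA_nonneg (w : Euc n) (H : Hyp n) : 0 ≤ sinA w H := by
  unfold sinA; positivity

lemma sinA_le_one (w : Euc n) (H : Hyp n) : sinA w H ≤ 1 := by
  refine div_le_one_of_le₀ ?_ (norm_nonneg w)
  simpa [H.2] using abs_real_inner_le_norm w H.1.1

lemma continuous_sinA (w : Euc n) : Continuous (sinA (n := n) w) := by
  unfold sinA; fun_prop

lemma sinA_smul_single {a : ℝ} (ha : a ≠ 0) (i : Fin n) (H : Hyp n) :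
    sinA (a • EuclideanSpace.single i 1) H = |H.1.1 i| := by
  rw [sinA, real_inner_smul_left, EuclideanSpace.inner_single_left, norm_smul, PiLp.norm_single]
  simp [abs_mul, ha]

def steepSeparating (r : ℝ) (x y : Euc n) : Set (Hyp n) :=
  {H | r ≤ sinA (y - x) H} ∩ {H | Separates H x y}

lemma steepSeparating_self (r : ℝ) (x : Euc n) : steepSeparating r x x = ∅ := by
  ext H
  simp [steepSeparating, Hyp.separates_iff, mul_self_nonneg]

lemma steepSeparating_subset_meets_segment (r : ℝ) (x y : Euc n) :
    steepSeparating r x y ⊆ meets (segment ℝ x y) :=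
  fun _ hH => Hyp.mem_meets_segment_iff.2 hH.2.le

end Hyperplanes

section Integral

variable {n : ℕ} {ν : Measure (Hyp n)} {o : Euc n}

lemma ae_sdist_ne_zero {x : Euc n} (hx : ν (meets {x}) = 0) : ∀ᵐ H ∂ν, H.sdist x ≠ 0 := by
  filter_upwards [measure_eq_zero_iff_ae_notMem.1 hx] with H hH
  exact fun h => hH (Hyp.mem_meets_singleton_iff.2 h)

lemma norm_fnu_le {x : Euc n} (hx : ν (meets (segment ℝ o x)) ≠ ⊤) :
    ‖fnu ν o x‖ ≤ ν.real (meets (segment ℝ o x)) := by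
  simpa [fnu] using norm_setIntegral_le_of_norm_le_const hx.lt_top fun H _ => (Hyp.norm_nrm o H).le

lemma isBounded_fnu_image {Q K : Set (Euc n)} (hK : ν (meets K) ≠ ⊤)
    (hQK : ∀ z ∈ Q, segment ℝ o z ⊆ K) : Bornology.IsBounded (fnu ν o '' Q) :=
  isBounded_iff_forall_norm_le.2 ⟨ν.real (meets K), forall_mem_image.2 fun z hz =>
    (norm_fnu_le (ne_top_of_le_ne_top hK (measure_mono (meets_mono (hQK z hz))))).trans
      (measureReal_mono (meets_mono (hQK z hz)) hK)⟩

lemma inner_fnu_eq_integral_indicator {x : Euc n} (hx : ν (meets (segment ℝ o x)) ≠ ⊤)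
    (w : Euc n) :
    inner ℝ w (fnu ν o x) =
      ∫ H, (meets (segment ℝ o x)).indicator (fun H => inner ℝ w (nrm o H)) H ∂ν := by
  have hint : IntegrableOn (nrm o) (meets (segment ℝ o x)) ν :=
    Measure.integrableOn_of_bounded hx (Hyp.measurable_nrm o).aestronglyMeasurable
      (M := 1) (ae_of_all _ fun H => (Hyp.norm_nrm o H).le)
  rw [integral_indicator (Hyp.measurableSet_meets_segment o x), fnu, integral_inner hint]

lemma integrable_indicator_inner_nrm {x : Euc n} (hx : ν (meets (segment ℝ o x)) ≠ ⊤)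
    (w : Euc n) :
    Integrable ((meets (segment ℝ o x)).indicator (fun H => inner ℝ w (nrm o H))) ν := by
  refine (integrable_indicator_iff (Hyp.measurableSet_meets_segment o x)).2 ?_
  refine Measure.integrableOn_of_bounded hx
    (measurable_const.inner (Hyp.measurable_nrm o)).aestronglyMeasurable (M := ‖w‖)
    (ae_of_all _ fun H => ?_)
  simpa [Hyp.norm_nrm] using norm_inner_le_norm (𝕜 := ℝ) w (nrm o H)

theorem inner_fnu_sub_fnu {x y : Euc n} (ho : ν (meets {o}) = 0) (hx : ν (meets {x}) = 0)
    (hy : ν (meets {y}) = 0) (hox : ν (meets (segment ℝ o x)) ≠ ⊤)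
    (hoy : ν (meets (segment ℝ o y)) ≠ ⊤) :
    inner ℝ (y - x) (fnu ν o y - fnu ν o x) =
      ∫ H in {H | Separates H x y}, |inner ℝ (y - x) H.1.1| ∂ν := by
  rw [inner_sub_right, inner_fnu_eq_integral_indicator hoy, inner_fnu_eq_integral_indicator hox,
    ← integral_sub (integrable_indicator_inner_nrm hoy _) (integrable_indicator_inner_nrm hox _),
    ← integral_indicator (Hyp.measurableSet_separates x y)]
  refine integral_congr_ae ?_
  filter_upwards [ae_sdist_ne_zero ho, ae_sdist_ne_zero hx, ae_sdist_ne_zero hy] with H h₀ h₁ h₂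
  exact Hyp.indicator_inner_nrm_sub_indicator h₀ h₁ h₂

theorem mul_measureReal_steepSeparating_le {ν : Measure (Hyp n)} {o x y : Euc n}
    (ho : ν (meets {o}) = 0) (hx : ν (meets {x}) = 0) (hy : ν (meets {y}) = 0)
    (hox : ν (meets (segment ℝ o x)) ≠ ⊤) (hoy : ν (meets (segment ℝ o y)) ≠ ⊤) (r : ℝ) :
    r * ν.real (steepSeparating r x y) ≤ ‖fnu ν o y - fnu ν o x‖ := by
  rcases eq_or_ne x y with rfl | hxy
  · simp [steepSeparating_self]
  set S := {H : Hyp n | Separates H x y}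
  have hw : 0 < ‖y - x‖ := norm_pos_iff.2 (sub_ne_zero.2 hxy.symm)
  have hS : ν S ≠ ⊤ := ne_top_of_le_ne_top (measure_union_ne_top hox hoy)
    (measure_mono (Hyp.separates_subset_meets_union o x y))
  have hmarkov : r * ν.real (steepSeparating r x y) ≤ ∫ H in S, sinA (y - x) H ∂ν := by
    have := mul_meas_ge_le_integral_of_nonneg (μ := ν.restrict S)
      (ae_of_all _ (sinA_nonneg (y - x)))
      (Measure.integrableOn_of_bounded hS (continuous_sinA _).aestronglyMeasurable (M := 1)
        (ae_of_all _ fun H => by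
          rw [Real.norm_of_nonneg (sinA_nonneg _ H)]; exact sinA_le_one _ H)) r
    rwa [measureReal_restrict_apply (measurableSet_le measurable_const
      (continuous_sinA _).measurable)] at this
  have hsin : ‖y - x‖ * ∫ H in S, sinA (y - x) H ∂ν = ∫ H in S, |inner ℝ (y - x) H.1.1| ∂ν := by
    rw [← integral_const_mul]
    simp only [sinA, mul_div_cancel₀ _ hw.ne']
  refine le_of_mul_le_mul_left ?_ hw
  calc ‖y - x‖ * (r * ν.real (steepSeparating r x y))
      ≤ ‖y - x‖ * ∫ H in S, sinA (y - x) H ∂ν := by gcongr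
    _ = inner ℝ (y - x) (fnu ν o y - fnu ν o x) := by rw [hsin, inner_fnu_sub_fnu ho hx hy hox hoy]
    _ ≤ ‖y - x‖ * ‖fnu ν o y - fnu ν o x‖ := real_inner_le_norm _ _

end Integral

section Cube

variable {n : ℕ}

lemma cube_eq_preimage (b : Euc n) (a : ℝ) :
    cube b a = EuclideanSpace.equiv (Fin n) ℝ ⁻¹' univ.pi fun j => Icc (b j) (b j + a) := by
  ext z
  simp only [cube, mem_preimage, mem_univ_pi]
  rfl

lemma isCompact_cube (b : Euc n) (a : ℝ) : IsCompact (cube b a) := by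
  rw [cube_eq_preimage]
  exact (EuclideanSpace.equiv (Fin n) ℝ).toHomeomorph.isCompact_preimage.2
    (isCompact_univ_pi fun _ => isCompact_Icc)

lemma convex_cube (b : Euc n) (a : ℝ) : Convex ℝ (cube b a) := by
  rw [cube_eq_preimage]
  exact (convex_pi fun _ _ => convex_Icc _ _).linear_preimage
    (EuclideanSpace.equiv (Fin n) ℝ).toLinearMap

def cubeVertex (b : Euc n) (a : ℝ) (s : Finset (Fin n)) : Euc n :=
  b + a • ∑ j ∈ s, EuclideanSpace.single j 1

lemma cubeVertex_apply (b : Euc n) (a : ℝ) (s : Finset (Fin n)) (j : Fin n) :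
    cubeVertex b a s j = b j + if j ∈ s then a else 0 := by
  simp [cubeVertex, Finset.sum_apply]

lemma cubeVertex_mem_cube {b : Euc n} {a : ℝ} (ha : 0 ≤ a) (s : Finset (Fin n)) :
    cubeVertex b a s ∈ cube b a := fun j => by
  rw [cubeVertex_apply]; split_ifs <;> simp [ha]

lemma cubeVertex_insert (b : Euc n) (a : ℝ) {s : Finset (Fin n)} {i : Fin n} (hi : i ∉ s) :
    cubeVertex b a (insert i s) = cubeVertex b a s + a • EuclideanSpace.single i 1 := by
  simp only [cubeVertex, Finset.sum_insert hi, smul_add]; abel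

lemma Hyp.sdist_cubeVertex (H : Hyp n) (b : Euc n) (a : ℝ) (s : Finset (Fin n)) :
    H.sdist (cubeVertex b a s) = H.sdist b + a * ∑ j ∈ s, H.1.1 j := by
  rw [← sub_eq_iff_eq_add', Hyp.sdist_sub_sdist, cubeVertex, add_sub_cancel_left,
    real_inner_smul_left, sum_inner]
  simp [EuclideanSpace.inner_single_left]

lemma Hyp.exists_separates_cubeVertex_insert {b : Euc n} {a : ℝ} (ha : 0 < a) {H : Hyp n}
    {z : Euc n} (hz : z ∈ cube b a) (hzH : H.sdist z = 0)
    (hH : ∀ s, H.sdist (cubeVertex b a s) ≠ 0) {i : Fin n} (hi : ∀ j, |H.1.1 j| ≤ |H.1.1 i|) :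
    ∃ s, i ∉ s ∧ Separates H (cubeVertex b a s) (cubeVertex b a (insert i s)) := by
  set v := H.1.1
  -- the `i`-th edge at a vertex `w` straddles `H` iff `H.sdist w ∈ uIcc 0 (-(a * v i))`
  have hz' : H.sdist b + ∑ j ∈ Finset.univ.erase i, (z j - b j) * v j ∈ uIcc 0 (-(a * v i)) := by
    have hsum : H.sdist b + ∑ j, (z j - b j) * v j = 0 := by
      rw [← hzH, eq_comm, ← sub_eq_iff_eq_add', Hyp.sdist_sub_sdist]
      simp [PiLp.inner_apply, mul_comm, v]
    rw [← Finset.add_sum_erase _ _ (Finset.mem_univ i)] at hsum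
    have := hz i
    simp only [mem_Icc] at this
    rw [mem_uIcc]
    rcases le_total 0 (v i) with hv | hv
    · right; constructor <;> nlinarith
    · left; constructor <;> nlinarith
  obtain ⟨s, hsT, hs⟩ := exists_subset_add_sum_mem_Icc (Finset.univ.erase i) (c := fun j => a * v j)
    (fun j _ => by
      rw [max_sub_min_eq_abs, sub_zero, abs_neg, abs_mul, abs_mul, abs_of_pos ha]
      exact mul_le_mul_of_nonneg_left (hi j) ha.le)
    (fun j _ => by
      have := hz j
      simp only [mem_Icc] at this
      rw [mem_uIcc]
      rcases le_total 0 (v j) with hv | hv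
      · left; constructor <;> nlinarith
      · right; constructor <;> nlinarith) hz'
  have his : i ∉ s := fun h => by simpa using hsT h
  rw [← Finset.mul_sum, ← Hyp.sdist_cubeVertex] at hs
  refine ⟨s, his, ?_⟩
  have h0 := hH s
  have h1 := hH (insert i s)
  rw [Hyp.separates_iff]
  rw [cubeVertex_insert b a his, Hyp.sdist_add] at h1 ⊢
  simp only [real_inner_smul_left, EuclideanSpace.inner_single_left, map_one, one_mul] at h1 ⊢
  refine lt_of_le_of_ne ?_ (mul_ne_zero h0 h1)
  rcases mem_uIcc.1 hs with ⟨h2, h3⟩ | ⟨h2, h3⟩ <;> nlinarith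

lemma meets_cube_subset {b : Euc n} {a : ℝ} (ha : 0 < a) :
    meets (cube b a) ⊆ (⋃ e : Fin n × Finset (Fin n),
      steepSeparating (1 / √n) (cubeVertex b a e.2) (cubeVertex b a (insert e.1 e.2))) ∪
      ⋃ s, meets {cubeVertex b a s} := by
  rintro H ⟨z, hzH, hz⟩
  by_cases hv : ∃ s, H.sdist (cubeVertex b a s) = 0
  · obtain ⟨s, hs⟩ := hv
    exact Or.inr (mem_iUnion.2 ⟨s, Hyp.mem_meets_singleton_iff.2 hs⟩)
  simp only [not_exists] at hv
  have : Nonempty (Fin n) := by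
    by_contra h
    rw [not_nonempty_iff] at h
    simpa [Subsingleton.elim H.1.1 0] using H.2
  obtain ⟨i, hi⟩ := Finite.exists_max fun j => |H.1.1 j|
  have hzH' : H.sdist z = 0 := sub_eq_zero.2 hzH
  obtain ⟨s, his, hs⟩ := H.exists_separates_cubeVertex_insert ha hz hzH' hv hi
  refine Or.inl (mem_iUnion.2 ⟨(i, s), ?_, hs⟩)
  have hn : (0 : ℝ) < √n := Real.sqrt_pos.2 (Nat.cast_pos.2 i.pos)
  have := norm_le_sqrt_card_mul_abs H.1.1 hi
  rw [H.2, Fintype.card_fin] at this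
  show 1 / √n ≤ sinA _ H
  rw [cubeVertex_insert b a his, add_sub_cancel_left, sinA_smul_single ha.ne', div_le_iff₀ hn]
  linarith

end Cube

section Estimate

variable {n : ℕ} {ν : Measure (Hyp n)} {o : Euc n} {b : Euc n} {a : ℝ}

lemma measure_meets_segment_le_sum (ha : 0 < a) (hv : ∀ s, ν (meets {cubeVertex b a s}) = 0)
    {p q : Euc n} (hp : p ∈ cube b a) (hq : q ∈ cube b a) :
    ν (meets (segment ℝ p q)) ≤ ∑ e : Fin n × Finset (Fin n),
      ν (steepSeparating (1 / √n) (cubeVertex b a e.2) (cubeVertex b a (insert e.1 e.2))) :=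
  calc ν (meets (segment ℝ p q))
      ≤ ν ((⋃ e : Fin n × Finset (Fin n),
          steepSeparating (1 / √n) (cubeVertex b a e.2) (cubeVertex b a (insert e.1 e.2))) ∪
          ⋃ s, meets {cubeVertex b a s}) :=
        measure_mono ((meets_mono ((convex_cube b a).segment_subset hp hq)).trans
          (meets_cube_subset ha))
    _ ≤ ν (⋃ e : Fin n × Finset (Fin n),
          steepSeparating (1 / √n) (cubeVertex b a e.2) (cubeVertex b a (insert e.1 e.2))) :=
        (measure_union_le _ _).trans_eq <| by rw [measure_iUnion_null hv, add_zero]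
    _ ≤ _ := measure_iUnion_fintype_le _ _

theorem inv_sqrt_mul_measureReal_meets_segment_le (ha : 0 < a) (ho : ν (meets {o}) = 0)
    (hv : ∀ s, ν (meets {cubeVertex b a s}) = 0)
    (hK : ν (meets (convexJoin ℝ {o} (cube b a))) ≠ ⊤) {p q : Euc n} (hp : p ∈ cube b a)
    (hq : q ∈ cube b a) :
    1 / √n * ν.real (meets (segment ℝ p q)) ≤ n * 2 ^ n * Metric.diam (fnu ν o '' cube b a) := by
  have hoK : ∀ z ∈ cube b a, segment ℝ o z ⊆ convexJoin ℝ {o} (cube b a) :=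
    fun z hz => segment_subset_convexJoin rfl hz
  have hfin : ∀ z ∈ cube b a, ν (meets (segment ℝ o z)) ≠ ⊤ :=
    fun z hz => ne_top_of_le_ne_top hK (measure_mono (meets_mono (hoK z hz)))
  have hvQ : ∀ s, cubeVertex b a s ∈ cube b a := cubeVertex_mem_cube ha.le
  set G : Fin n × Finset (Fin n) → Set (Hyp n) := fun e =>
    steepSeparating (1 / √n) (cubeVertex b a e.2) (cubeVertex b a (insert e.1 e.2))
  have hGfin : ∀ e, ν (G e) ≠ ⊤ := fun e => ne_top_of_le_ne_top hK <| measure_mono <|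
    (steepSeparating_subset_meets_segment _ _ _).trans <| meets_mono <|
      ((convex_cube b a).segment_subset (hvQ _) (hvQ _)).trans
        (subset_convexJoin_right (singleton_nonempty o))
  have hedge : ∀ e, 1 / √n * ν.real (G e) ≤ Metric.diam (fnu ν o '' cube b a) := fun e =>
    (mul_measureReal_steepSeparating_le ho (hv _) (hv _) (hfin _ (hvQ _)) (hfin _ (hvQ _)) _).trans
      (dist_eq_norm (E := Euc n) _ _ ▸ Metric.dist_le_diam_of_mem (isBounded_fnu_image hK hoK)
        (mem_image_of_mem _ (hvQ _)) (mem_image_of_mem _ (hvQ _)))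
  calc 1 / √n * ν.real (meets (segment ℝ p q))
      ≤ 1 / √n * ∑ e, ν.real (G e) := by
        gcongr
        exact (ENNReal.toReal_mono (ENNReal.sum_ne_top.2 fun e _ => hGfin e)
          (measure_meets_segment_le_sum ha hv hp hq)).trans_eq
          (ENNReal.toReal_sum fun e _ => hGfin e)
    _ ≤ ∑ _e : Fin n × Finset (Fin n), Metric.diam (fnu ν o '' cube b a) := by
        rw [Finset.mul_sum]; exact Finset.sum_le_sum fun e _ => hedge e
    _ = n * 2 ^ n * Metric.diam (fnu ν o '' cube b a) := by simp [Fintype.card_finset]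

end Estimate

theorem stmt14_general (n : ℕ) (Ω : Set (Euc n))
    (hΩc : Convex ℝ Ω) (ν : Measure (Hyp n))
    (hpt : ∀ p ∈ Ω, ν (meets {p}) = 0)
    (hcpt : ∀ K ⊆ Ω, IsCompact K → ν (meets K) < ⊤)
    (o : Euc n) (ho : o ∈ Ω) :
    ∀ (b : Euc n) (a : ℝ), 0 < a → cube b a ⊆ Ω →
      ∀ p ∈ cube b a, ∀ q ∈ cube b a,
        (1 / (4 ^ n * Real.sqrt n)) * (ν (meets (segment ℝ p q))).toReal ≤
          Metric.diam (fnu ν o '' cube b a) := by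
  intro b a ha hQΩ p hp q hq
  have hK : ν (meets (convexJoin ℝ {o} (cube b a))) < ⊤ :=
    hcpt _ (convexJoin_subset (singleton_subset_iff.2 ho) hQΩ hΩc)
      (isCompact_singleton.convexJoin (isCompact_cube b a))
  have hmain := inv_sqrt_mul_measureReal_meets_segment_le ha (hpt o ho)
    (fun s => hpt _ (hQΩ (cubeVertex_mem_cube ha.le s))) hK.ne hp hq
  have h4 : (n : ℝ) * 2 ^ n ≤ 4 ^ n :=
    calc (n : ℝ) * 2 ^ n ≤ 2 ^ n * 2 ^ n := by gcongr; exact_mod_cast Nat.lt_two_pow_self.le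
      _ = 4 ^ n := by rw [← mul_pow]; norm_num
  calc 1 / (4 ^ n * √n) * ν.real (meets (segment ℝ p q))
      = 1 / √n * ν.real (meets (segment ℝ p q)) / 4 ^ n := by ring
    _ ≤ Metric.diam (fnu ν o '' cube b a) := div_le_of_le_mul₀ (by positivity) Metric.diam_nonneg
        (hmain.trans (by nlinarith [Metric.diam_nonneg (s := fnu ν o '' cube b a)]))

/-- with `c = 4⁻ⁿ n^{-1/2}`, for every cube `Q ⊆ Ω`,
`diam f_ν(Q) ≥ c · diam_ν Q` (stated via `d_ν(p,q) ` for all pairs `p, q ∈ Q`). -/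
theorem stmt14 (n : ℕ) (hn : 2 ≤ n) (Ω : Set (Euc n)) (hΩo : IsOpen Ω) (hΩne : Ω.Nonempty)
    (hΩc : Convex ℝ Ω) (ν : Measure (Hyp n))
    (hpt : ∀ p ∈ Ω, ν (meets {p}) = 0)
    (hseg : ∀ x ∈ Ω, ∀ y ∈ Ω, x ≠ y → 0 < ν (meets (segment ℝ x y)))
    (hcpt : ∀ K ⊆ Ω, IsCompact K → ν (meets K) < ⊤)
    (o : Euc n) (ho : o ∈ Ω) :
    ∀ (b : Euc n) (a : ℝ), 0 < a → cube b a ⊆ Ω →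
      ∀ p ∈ cube b a, ∀ q ∈ cube b a,
        (1 / (4 ^ n * Real.sqrt n)) * (ν (meets (segment ℝ p q))).toReal ≤
          Metric.diam (fnu ν o '' cube b a) :=
  stmt14_general n Ω hΩc ν hpt hcpt o ho
end
end

section
/- For every x ∈ ℝⁿ and r > 0, the measure ν = Φ_*(μ × ω) of the set of hyperplanes meeting the ball B(x,r) satisfies ν(π B(x,r)) ≤ μ(B(x,r)) + C ∫_{ℝⁿ \ B(x,r)} r/|x − y| dμ(y) for a dimensional constant C. -/
open MeasureTheory Set

noncomputable section

/-- The normalized volume measure on the unit sphere `S^{n-1}`. -/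
def sphOmega (n : ℕ) : Measure (Metric.sphere (0 : Euc n) 1) :=
  (((volume : Measure (Euc n)).toSphere) Set.univ)⁻¹ • ((volume : Measure (Euc n)).toSphere)

/-- `Φ(a, v)` is the hyperplane through `a` with unit normal `v`. -/
def PhiMap {n : ℕ} (p : Euc n × Metric.sphere (0 : Euc n) 1) : Hyp n :=
  ⟨((p.2 : Euc n), (inner ℝ p.1 (p.2 : Euc n) : ℝ)),
    mem_sphere_zero_iff_norm.mp p.2.2⟩

/-- The pushforward measure `ν = Φ_*(μ × ω)` on the space of hyperplanes. -/
def nuPush {n : ℕ} (μ : Measure (Euc n)) : Measure (Hyp n) :=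
  Measure.map PhiMap (μ.prod (sphOmega n))


/-!
Pushing forward, `ν(π B(x,r)) = ∫ ω{v : |⟪x - y, v⟫| < r} dμ(y)`. For `y ∈ B(x,r)` the integrand
is at most `ω(S^{n-1}) ≤ 1`. For `y ∉ B(x,r)` it is the `ω`-measure of a slab of width
`r / |x - y|` around a great sphere; the cone over that slab lies in a slab of the unit ball,
whose volume is at most `2ⁿ r / |x - y|` (rotate the normal to a coordinate axis and compare
with a box), and polar coordinates turn this into `ω`-measure at most `C r / |x - y|`.
-/

open MeasureTheory Metric Set
open scoped ENNReal NNReal Pointwise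

variable {n : ℕ}

lemma volume_abs_apply_lt_inter_ball_le (i : Fin n) (δ : ℝ) :
    volume {y : Euc n | |y i| < δ ∧ ‖y‖ < 1} ≤ 2 ^ n * ENNReal.ofReal δ := by
  classical
  set box : Fin n → Set ℝ := Function.update (fun _ => Ioo (-1) 1) i (Ioo (-δ) δ)
  have hsub : {y : Euc n | |y i| < δ ∧ ‖y‖ < 1} ⊆
      (MeasurableEquiv.toLp 2 (Fin n → ℝ)).symm ⁻¹' univ.pi box := by
    rintro y ⟨hyi, hy⟩ j -
    rcases eq_or_ne j i with rfl | hj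
    · simpa [box, abs_lt] using hyi
    · simpa [box, hj, abs_lt] using (PiLp.norm_apply_le y j).trans_lt hy
  have hn : n - 1 + 1 = n := Nat.sub_add_cancel (Nat.one_le_of_lt i.2)
  calc volume {y : Euc n | |y i| < δ ∧ ‖y‖ < 1}
      ≤ volume (univ.pi box) :=
        (measure_mono hsub).trans_eq <| (EuclideanSpace.volume_preserving_symm_measurableEquiv_toLp
          (Fin n)).measure_preimage_equiv _
    _ = ∏ j, volume (box j) := volume_pi_pi _
    _ = 2 ^ n * ENNReal.ofReal δ := by
        have hside : ∀ j ∈ ({i}ᶜ : Finset (Fin n)), volume (box j) = 2 := fun j hj => by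
          rw [Finset.mem_compl, Finset.mem_singleton] at hj
          simp [box, hj, Real.volume_Ioo, one_add_one_eq_two]
        rw [Fintype.prod_eq_mul_prod_compl i, Finset.prod_congr rfl hside]
        simp only [box, Function.update_self, Real.volume_Ioo, Finset.prod_const,
          Finset.card_compl, Finset.card_singleton, Fintype.card_fin, sub_neg_eq_add, ← two_mul,
          ENNReal.ofReal_mul zero_le_two, ENNReal.ofReal_ofNat]
        rw [← hn, pow_succ, Nat.add_sub_cancel]
        ring

lemma volume_abs_inner_lt_inter_ball_le {e : Euc n} (he : ‖e‖ = 1) (δ : ℝ) :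
    volume {x : Euc n | |inner ℝ e x| < δ ∧ ‖x‖ < 1} ≤ 2 ^ n * ENNReal.ofReal δ := by
  obtain ⟨i⟩ : Nonempty (Fin n) := by
    by_contra h
    rw [not_nonempty_iff] at h
    simp [Subsingleton.elim e 0] at he
  set R := (ℝ ∙ (e - EuclideanSpace.single i 1))ᗮ.reflection
  have hR : R e = EuclideanSpace.single i 1 := Submodule.reflection_sub (by simp [he])
  have hpre : {x : Euc n | |inner ℝ e x| < δ ∧ ‖x‖ < 1} =
      R ⁻¹' {y : Euc n | |y i| < δ ∧ ‖y‖ < 1} := by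
    ext x
    simp [← R.inner_map_map e, hR, EuclideanSpace.inner_single_left]
  rw [hpre]
  exact (R.measurePreserving.measure_preimage_le _).trans (volume_abs_apply_lt_inter_ball_le i δ)

lemma toSphere_abs_inner_lt_le {e : Euc n} (he : ‖e‖ = 1) (δ : ℝ) :
    volume.toSphere {v : sphere (0 : Euc n) 1 | |inner ℝ e (v : Euc n)| < δ} ≤
      n * 2 ^ n * ENNReal.ofReal δ := by
  have hmeas : MeasurableSet {v : sphere (0 : Euc n) 1 | |inner ℝ e (v : Euc n)| < δ} :=
    measurableSet_lt (by fun_prop) measurable_const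
  have hcone :
      Ioo (0 : ℝ) 1 • ((↑) '' {v : sphere (0 : Euc n) 1 | |inner ℝ e (v : Euc n)| < δ}) ⊆
        {x : Euc n | |inner ℝ e x| < δ ∧ ‖x‖ < 1} := by
    rintro _ ⟨c, ⟨hc0, hc1⟩, _, ⟨v, hv, rfl⟩, rfl⟩
    have hv1 : ‖(v : Euc n)‖ = 1 := norm_eq_of_mem_sphere v
    simp only [mem_ofPred_eq] at hv ⊢
    rw [real_inner_smul_right, abs_mul, abs_of_pos hc0, norm_smul, hv1, Real.norm_of_nonneg hc0.le]
    exact ⟨(mul_le_of_le_one_left (abs_nonneg _) hc1.le).trans_lt hv, by simpa using hc1⟩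
  rw [Measure.toSphere_apply' _ hmeas, finrank_euclideanSpace_fin, mul_assoc]
  gcongr
  exact (measure_mono hcone).trans (volume_abs_inner_lt_inter_ball_le he δ)

lemma sphOmega_apply (s : Set (sphere (0 : Euc n) 1)) :
    sphOmega n s = ((volume : Measure (Euc n)).toSphere univ)⁻¹ * volume.toSphere s := rfl

lemma sphOmega_univ_le_one : sphOmega n univ ≤ 1 :=
  ENNReal.inv_mul_le_one _

instance : IsFiniteMeasure (sphOmega n) :=
  ⟨sphOmega_univ_le_one.trans_lt ENNReal.one_lt_top⟩

lemma exists_sphOmega_abs_inner_lt_le : ∃ C : ℝ≥0, ∀ u : Euc n, u ≠ 0 → ∀ t : ℝ,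
    sphOmega n {v | |inner ℝ u (v : Euc n)| < t} ≤ C * ENNReal.ofReal (t / ‖u‖) := by
  rcases subsingleton_or_nontrivial (Euc n) with _ | _
  · exact ⟨0, fun u hu => absurd (Subsingleton.elim u 0) hu⟩
  have hT : (volume : Measure (Euc n)).toSphere univ ≠ 0 :=
    Measure.measure_univ_ne_zero.mpr (Measure.toSphere_ne_zero _)
  refine ⟨(((volume : Measure (Euc n)).toSphere univ)⁻¹ * (n * 2 ^ n)).toNNReal,
    fun u hu t => ?_⟩
  have hu' : 0 < ‖u‖ := norm_pos_iff.mpr hu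
  have hslab : {v : sphere (0 : Euc n) 1 | |inner ℝ u (v : Euc n)| < t} =
      {v : sphere (0 : Euc n) 1 | |inner ℝ (‖u‖⁻¹ • u) (v : Euc n)| < t / ‖u‖} := by
    ext v
    simp only [mem_ofPred_eq, real_inner_smul_left, abs_mul, abs_inv, abs_norm,
      inv_mul_lt_iff₀ hu', mul_div_cancel₀ _ hu'.ne']
  rw [ENNReal.coe_toNNReal (by finiteness), sphOmega_apply, hslab, mul_assoc, mul_assoc]
  gcongr
  rw [← mul_assoc]
  exact toSphere_abs_inner_lt_le (norm_smul_inv_norm hu) _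

lemma meets_ball (x : Euc n) (r : ℝ) :
    meets (ball x r) = {H : Hyp n | |inner ℝ x H.1.1 - H.1.2| < r} := by
  ext ⟨⟨v, c⟩, hv⟩
  simp only [meets, hset, mem_ofPred_eq]
  constructor
  · rintro ⟨z, hz, hzx⟩
    calc |inner ℝ x v - c| = |inner ℝ (x - z) v| := by rw [inner_sub_left, mem_ofPred_eq.mp hz]
      _ ≤ ‖x - z‖ * ‖v‖ := abs_real_inner_le_norm _ _
      _ < r := by rwa [hv, mul_one, ← dist_eq_norm, dist_comm]
  · intro h
    refine ⟨x - (inner ℝ x v - c) • v, ?_, ?_⟩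
    · rw [mem_ofPred_eq, inner_sub_left, real_inner_smul_left, real_inner_self_eq_norm_mul_norm,
        hv]
      ring
    · rwa [mem_ball, dist_eq_norm, sub_sub_cancel_left, norm_neg, norm_smul, hv, mul_one,
        Real.norm_eq_abs]

lemma measurableSet_meets_ball (x : Euc n) (r : ℝ) : MeasurableSet (meets (ball x r)) := by
  rw [meets_ball]
  exact measurableSet_lt (by fun_prop) measurable_const

lemma measurable_phiMap : Measurable (PhiMap (n := n)) := by
  unfold PhiMap
  fun_prop

lemma nuPush_meets_ball (μ : Measure (Euc n)) (x : Euc n) (r : ℝ) :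
    nuPush μ (meets (ball x r)) =
      ∫⁻ y, sphOmega n {v | |inner ℝ (x - y) (v : Euc n)| < r} ∂μ := by
  have hpre : PhiMap ⁻¹' meets (ball x r) =
      {p : Euc n × sphere (0 : Euc n) 1 | |inner ℝ (x - p.1) (p.2 : Euc n)| < r} := by
    ext p
    simp [meets_ball, PhiMap, inner_sub_left]
  rw [nuPush, Measure.map_apply measurable_phiMap (measurableSet_meets_ball x r), hpre,
    Measure.prod_apply (measurableSet_lt (by fun_prop) measurable_const)]
  rfl

theorem stmt17_general (n : ℕ) :
    ∃ C : NNReal, ∀ (μ : Measure (Euc n)), IsFiniteMeasureOnCompacts μ →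
      ∀ (x : Euc n) (r : ℝ), 0 < r →
        nuPush μ (meets (Metric.ball x r)) ≤
          μ (Metric.ball x r) +
            C * ∫⁻ y in (Metric.ball x r)ᶜ, ENNReal.ofReal (r / ‖x - y‖) ∂μ := by
  obtain ⟨C, hC⟩ := exists_sphOmega_abs_inner_lt_le (n := n)
  refine ⟨C, fun μ _ x r hr => ?_⟩
  rw [nuPush_meets_ball, ← lintegral_add_compl _ measurableSet_ball,
    ← lintegral_const_mul' _ _ ENNReal.coe_ne_top]
  gcongr ?_ + ?_
  · calc ∫⁻ y in ball x r, sphOmega n {v | |inner ℝ (x - y) (v : Euc n)| < r} ∂μ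
        ≤ ∫⁻ _ in ball x r, 1 ∂μ :=
          lintegral_mono fun _ => (measure_mono (subset_univ _)).trans sphOmega_univ_le_one
      _ = μ (ball x r) := setLIntegral_one _
  · refine setLIntegral_mono' measurableSet_ball.compl fun y hy => hC _ ?_ r
    rw [sub_ne_zero]
    rintro rfl
    exact hy (mem_ball_self hr)

/-- for a dimensional constant `C`, for every Radon measure `μ`, point `x` and
radius `r > 0`, `ν(π B(x,r)) ≤ μ(B(x,r)) + C ∫_{ℝⁿ \ B(x,r)} r/|x−y| dμ(y)` where
`ν = Φ_*(μ × ω)`. -/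
theorem stmt17 (n : ℕ) (hn : 2 ≤ n) :
    ∃ C : NNReal, ∀ (μ : Measure (Euc n)), IsFiniteMeasureOnCompacts μ →
      ∀ (x : Euc n) (r : ℝ), 0 < r →
        nuPush μ (meets (Metric.ball x r)) ≤
          μ (Metric.ball x r) +
            C * ∫⁻ y in (Metric.ball x r)ᶜ, ENNReal.ofReal (r / ‖x - y‖) ∂μ :=
  stmt17_general n
end
end
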